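/- With the setup of the previous statement, if additionally Σ_{ν∈U} x_ν < N, then (((Π_{ν∈U} y_ν) - 1 mod N²) / N) mod N = Σ_{ν∈U} x_ν, where the division by N is exact integer division. -/

import Mathlib

/-!
Since `N * N = 0` in `ZMod (N ^ 2)`, the binomial expansion collapses to `(1 + N) ^ n = 1 + n * N`.
The masks `h ^ p ν` multiply to `h ^ (∑ p ν) = 1`, so `∏ y ν = 1 + (∑ x ν) * N`, and because
`∑ x ν < N` this element's representative in `[0, N ^ 2)` is the natural number `1 + (∑ x ν) * N`
itself, from which `∑ x ν` is read off.
-/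

theorem one_add_pow_of_mul_self_eq_zero {R : Type*} [Semiring R] {a : R} (ha : a * a = 0)
    (n : ℕ) : (1 + a) ^ n = 1 + n * a := by
  induction n with
  | zero => simp
  | succ n ih =>
    rw [pow_succ, ih, Nat.cast_succ]
    calc (1 + n * a) * (1 + a) = 1 + (n + 1) * a + n * (a * a) := by noncomm_ring
      _ = 1 + (n + 1) * a := by rw [ha, mul_zero, add_zero]

theorem Finset.prod_zpow_eq_zpow_sum {ι G : Type*} [CommGroup G] (s : Finset ι) (f : ι → ℤ)
    (g : G) : ∏ i ∈ s, g ^ f i = g ^ ∑ i ∈ s, f i := by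
  induction s using Finset.cons_induction with
  | empty => simp
  | cons i s hi ih => rw [Finset.prod_cons, Finset.sum_cons, ih, zpow_add]

theorem Finset.prod_pow_mul_units_zpow {ι M : Type*} [CommMonoid M] (s : Finset ι) (a : M)
    (u : Mˣ) (x : ι → ℕ) (p : ι → ℤ) :
    ∏ i ∈ s, a ^ x i * ((u ^ p i : Mˣ) : M) = (a ^ ∑ i ∈ s, x i) * ((u ^ ∑ i ∈ s, p i : Mˣ) : M) := by
  rw [Finset.prod_mul_distrib, Finset.prod_pow_eq_pow_sum, ← Units.coe_prod,
    Finset.prod_zpow_eq_zpow_sum]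

namespace ZMod

theorem natCast_mul_self_eq_zero_of_sq (N : ℕ) : (N : ZMod (N ^ 2)) * N = 0 := by
  rw [← Nat.cast_mul, ← sq, natCast_self]

theorem one_add_natCast_pow (N n : ℕ) : (1 + (N : ZMod (N ^ 2))) ^ n = 1 + n * N :=
  one_add_pow_of_mul_self_eq_zero (natCast_mul_self_eq_zero_of_sq N) n

theorem val_one_add_mul_self {N S : ℕ} (hN : 2 ≤ N) (hS : S < N) :
    (1 + S * N : ZMod (N ^ 2)).val = 1 + S * N := by
  have hlt : 1 + S * N < N ^ 2 := by nlinarith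
  exact_mod_cast val_cast_of_lt hlt

end ZMod

theorem stmt_4_general (N : ℕ) (hN : 2 ≤ N) (U : Type) [Fintype U]
    (x : U → ℕ) (hx : ∑ ν : U, x ν < N) (p : U → ℤ) (hp : ∑ ν : U, p ν = 0)
    (h : (ZMod (N ^ 2))ˣ)
    (y : U → ZMod (N ^ 2))
    (hy : ∀ ν, y ν = (1 + (N : ZMod (N ^ 2))) ^ (x ν) * ((h ^ (p ν) : (ZMod (N ^ 2))ˣ) : ZMod (N ^ 2))) :
    (((∏ ν : U, y ν).val - 1) / N) % N = ∑ ν : U, x ν := by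
  have hprod : ∏ ν : U, y ν = 1 + ((∑ ν : U, x ν : ℕ) : ZMod (N ^ 2)) * N := by
    rw [Finset.prod_congr rfl fun ν _ => hy ν, Finset.prod_pow_mul_units_zpow, hp, zpow_zero,
      Units.val_one, mul_one, ZMod.one_add_natCast_pow]
  rw [hprod, ZMod.val_one_add_mul_self hN hx, Nat.add_sub_cancel_left,
    Nat.mul_div_cancel _ (by omega), Nat.mod_eq_of_lt hx]

/-- Decoding the aggregate from the product of masked values. -/
theorem stmt_4 (N : ℕ) (hN : 2 ≤ N) (U : Type) [Fintype U]
    (x : U → ℕ) (hx : ∑ ν : U, x ν < N) (p : U → ℤ) (hp : ∑ ν : U, p ν = 0)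
    (h : (ZMod (N ^ 2))ˣ) (hord : orderOf h ∣ N)
    (y : U → ZMod (N ^ 2))
    (hy : ∀ ν, y ν = (1 + (N : ZMod (N ^ 2))) ^ (x ν) * ((h ^ (p ν) : (ZMod (N ^ 2))ˣ) : ZMod (N ^ 2))) :
    (((∏ ν : U, y ν).val - 1) / N) % N = ∑ ν : U, x ν :=
  stmt_4_general N hN U x hx p hp h y hy
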